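/- For z real and n a natural number: ∫_0^π e^{z cos θ} cos(n θ) dθ = π I_n(z). -/

import Mathlib

/-!
Expanding `exp (z cos θ)` in its power series and integrating termwise (the `k`-th term is
dominated by `|z| ^ k / k!`) reduces the claim to the moments `J k n = ∫₀^π cos^k θ cos nθ dθ`
(`cosMoment k n`). Integration by parts gives `(k + n + 2) J (k+1) (n+1) = (k + 1) J k n`; since
also `J (k+1) 1 = J (k+2) 0`, this recurrence and `J 0 0 = π`, `J 0 (n+1) = 0`, `J 1 0 = 0`
determine every moment: `J k n` vanishes unless `k = n + 2m`, and
`J (n+2m) n = π (n+2m)! / (2^(n+2m) m! (n+m)!)`, which turns the series into `π I_n(z)`.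
-/

open MeasureTheory Real

/-- Modified Bessel function of integer order `n`, via its power series. -/
noncomputable def besselIn (n : ℕ) (z : ℝ) : ℝ :=
  ∑' m : ℕ, (z / 2) ^ (n + 2 * m) / (m.factorial * (n + m).factorial)

open scoped Nat

theorem hasSum_intervalIntegral_exp_mul {f g : ℝ → ℝ} {a b C D : ℝ} (hf : Measurable f)
    (hg : Measurable g) (hfC : ∀ x, |f x| ≤ C) (hgD : ∀ x, |g x| ≤ D) :
    HasSum (fun k : ℕ => ∫ x in a..b, f x ^ k / k ! * g x) (∫ x in a..b, exp (f x) * g x) := by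
  refine intervalIntegral.hasSum_integral_of_dominated_convergence (fun k _ => C ^ k / k ! * D)
    (fun k => (((hf.pow_const k).div_const _).mul hg).aestronglyMeasurable) ?_ ?_ ?_ ?_
  · refine fun k => .of_forall fun x _ => ?_
    rw [norm_mul, norm_div, norm_pow, Real.norm_natCast]
    have hC : 0 ≤ C := (abs_nonneg _).trans (hfC x)
    gcongr
    exacts [hfC x, hgD x]
  · exact .of_forall fun _ _ => (Real.summable_pow_div_factorial C).mul_right D
  · exact intervalIntegrable_const
  · refine .of_forall fun x _ => ?_
    rw [Real.exp_eq_exp_ℝ]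
    exact (NormedSpace.expSeries_div_hasSum_exp (f x)).mul_right (g x)

noncomputable def cosMoment (k n : ℕ) : ℝ :=
  ∫ θ in (0 : ℝ)..π, cos θ ^ k * cos (n * θ)

theorem cosMoment_zero_zero : cosMoment 0 0 = π := by
  simp [cosMoment]

theorem cosMoment_zero_succ (n : ℕ) : cosMoment 0 (n + 1) = 0 := by
  have hn : ((n + 1 : ℕ) : ℝ) ≠ 0 := by positivity
  simp only [cosMoment, pow_zero, one_mul]
  rw [intervalIntegral.integral_comp_mul_left cos hn, integral_cos, sin_nat_mul_pi]
  simp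

theorem cosMoment_one_zero : cosMoment 1 0 = 0 := by
  simp [cosMoment]

theorem cosMoment_add_one_one (k : ℕ) : cosMoment (k + 1) 1 = cosMoment (k + 2) 0 := by
  simp only [cosMoment, Nat.cast_one, one_mul, Nat.cast_zero, zero_mul, cos_zero, mul_one, pow_succ]

theorem hasDerivAt_cos_pow_mul_sin (k n : ℕ) (x : ℝ) :
    HasDerivAt (fun θ => cos θ ^ (k + 1) * sin ((n + 1 : ℕ) * θ))
      ((k + n + 2) * (cos x ^ (k + 1) * cos ((n + 1 : ℕ) * x)) -
        (k + 1) * (cos x ^ k * cos (n * x))) x := by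
  have hpow : HasDerivAt (fun θ => cos θ ^ (k + 1)) ((k + 1 : ℕ) * cos x ^ k * -sin x) x := by
    simpa using (hasDerivAt_cos x).fun_pow (k + 1)
  have hsin :
      HasDerivAt (fun θ => sin ((n + 1 : ℕ) * θ)) (cos ((n + 1 : ℕ) * x) * (n + 1 : ℕ)) x :=
    (hasDerivAt_sin _).comp x ((hasDerivAt_id x).const_mul _ |>.congr_deriv (mul_one _))
  have hcos : cos (n * x) = cos ((n + 1 : ℕ) * x) * cos x + sin ((n + 1 : ℕ) * x) * sin x := by
    rw [← cos_sub]; push_cast; ring_nf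
  refine (hpow.mul hsin).congr_deriv ?_
  rw [hcos]; push_cast; ring

-- Integration by parts against `cos θ ^ (k + 1) * sin ((n + 1) θ)`, which vanishes at `0` and `π`.
theorem cosMoment_add_one_add_one (k n : ℕ) :
    (k + n + 2 : ℝ) * cosMoment (k + 1) (n + 1) = (k + 1) * cosMoment k n := by
  have hint : ∀ j m : ℕ, IntervalIntegrable (fun θ => cos θ ^ j * cos (m * θ)) volume 0 π :=
    fun j m => (by fun_prop : Continuous _).intervalIntegrable 0 π
  have hibp := intervalIntegral.integral_eq_sub_of_hasDerivAt
    (fun x _ => hasDerivAt_cos_pow_mul_sin k n x)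
    (((hint (k + 1) (n + 1)).const_mul _).sub ((hint k n).const_mul _))
  rw [intervalIntegral.integral_sub ((hint _ _).const_mul _) ((hint _ _).const_mul _),
    intervalIntegral.integral_const_mul, intervalIntegral.integral_const_mul] at hibp
  rw [mul_zero, sin_zero, sin_nat_mul_pi, mul_zero, mul_zero, sub_zero] at hibp
  simp only [cosMoment]
  linarith

theorem cosMoment_add_two_zero (k : ℕ) :
    (k + 2 : ℝ) * cosMoment (k + 2) 0 = (k + 1) * cosMoment k 0 := by
  simpa [← cosMoment_add_one_one] using cosMoment_add_one_add_one k 0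

theorem cosMoment_odd_zero (j : ℕ) : cosMoment (2 * j + 1) 0 = 0 := by
  induction j with
  | zero => exact cosMoment_one_zero
  | succ j ih =>
    have h := cosMoment_add_two_zero (2 * j + 1)
    rw [ih, mul_zero] at h
    exact (mul_eq_zero.mp h).resolve_left (by positivity)

theorem cosMoment_eq_zero {k n : ℕ} (h : ∀ m, k ≠ n + 2 * m) : cosMoment k n = 0 := by
  induction n generalizing k with
  | zero =>
    obtain ⟨j, rfl⟩ : Odd k := Nat.not_even_iff_odd.mp fun ⟨m, hm⟩ => h m (by omega)
    exact cosMoment_odd_zero j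
  | succ n ih =>
    cases k with
    | zero => exact cosMoment_zero_succ n
    | succ k =>
      have hrec := cosMoment_add_one_add_one k n
      rw [ih fun m hm => h m (by omega), mul_zero] at hrec
      exact (mul_eq_zero.mp hrec).resolve_left (by positivity)

theorem cosMoment_two_mul_zero (m : ℕ) :
    cosMoment (2 * m) 0 = π * (2 * m)! / (2 ^ (2 * m) * m ! * m !) := by
  induction m with
  | zero => simp [cosMoment_zero_zero]
  | succ m ih =>
    have hrec := cosMoment_add_two_zero (2 * m)
    rw [ih] at hrec
    rw [show 2 * m + 2 = 2 * m + 1 + 1 from rfl] at hrec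
    rw [show 2 * (m + 1) = 2 * m + 1 + 1 by ring, eq_div_iff (by positivity)]
    simp only [Nat.factorial_succ, pow_succ, Nat.cast_mul]
    push_cast at hrec ⊢
    field_simp at hrec
    linear_combination (2 * (m : ℝ) + 2) * hrec

theorem cosMoment_add_two_mul (n m : ℕ) :
    cosMoment (n + 2 * m) n = π * (n + 2 * m)! / (2 ^ (n + 2 * m) * m ! * (n + m)!) := by
  induction n with
  | zero => simpa using cosMoment_two_mul_zero m
  | succ n ih =>
    have hrec := cosMoment_add_one_add_one (n + 2 * m) n
    rw [ih] at hrec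
    rw [show n + 1 + 2 * m = n + 2 * m + 1 by ring, show n + 1 + m = n + m + 1 by ring,
      eq_div_iff (by positivity)]
    simp only [Nat.factorial_succ, pow_succ, Nat.cast_mul]
    push_cast at hrec ⊢
    field_simp at hrec
    linear_combination hrec

theorem besselIn_integral_rep (z : ℝ) (n : ℕ) :
    (∫ θ in (0 : ℝ)..π, Real.exp (z * Real.cos θ) * Real.cos (n * θ)) = π * besselIn n z := by
  have hzcos : ∀ θ, |z * cos θ| ≤ |z| := fun θ => by
    rw [abs_mul]; exact mul_le_of_le_one_right (abs_nonneg z) (abs_cos_le_one θ)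
  have hseries : HasSum (fun k : ℕ => z ^ k / k ! * cosMoment k n)
      (∫ θ in (0 : ℝ)..π, exp (z * cos θ) * cos (n * θ)) := by
    convert hasSum_intervalIntegral_exp_mul (by fun_prop) (by fun_prop) hzcos
      (fun θ => abs_cos_le_one (n * θ)) using 2 with k
    rw [cosMoment, ← intervalIntegral.integral_const_mul]
    congr 1 with θ
    ring
  have hinj : Function.Injective fun m : ℕ => n + 2 * m := fun a b h => by dsimp only at h; omega
  have hsub := (hinj.hasSum_iff fun k hk => by
    rw [cosMoment_eq_zero fun m hm => hk ⟨m, hm.symm⟩, mul_zero]).mpr hseries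
  rw [← hsub.tsum_eq, besselIn, ← tsum_mul_left]
  congr 1 with m
  rw [Function.comp_apply, cosMoment_add_two_mul, div_pow]
  field_simp
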